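/- arXiv:2103.04696 — 2 statements merged into one kernel-verified Lean document; each statement's English description precedes it below -/
import Mathlib

section
/- Let L be a language over a finite alphabet not containing the empty word, and for each n let C_n = Z/nZ act on L^{\times n} by cyclic permutation of components. Then the strict growth series of the disjoint union of quotients \bigcup_{n \ge 1} L^{\times n}/C_n (with length of an orbit the common length of its tuples) equals \sum_{k=1}^\infty \sum_{l=1}^\infty \frac{\phi(k)}{kl} (F_L(z^k))^l, where \phi is the Euler totient function. -/
/-- The `n`-tuples of words of `L` of total length `m`. -/
def LTuples {X : Type*} (L : Set (List X)) (n m : ℕ) : Type _ :=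
  {v : Fin n → List X // (∀ i, v i ∈ L) ∧ (∑ i, (v i).length) = m}

/-- Cyclic rotation relation on `n`-tuples: `w` is a cyclic permutation of `v`. -/
def rotRel {X : Type*} (L : Set (List X)) (n m : ℕ) :
    LTuples L n m → LTuples L n m → Prop :=
  fun v w => ∃ j : Fin n, ∀ i : Fin n, w.1 i = v.1 (i + j)

/-- The number of `C_n`-orbits (necklaces) of `n`-tuples of words of `L`
of total length `m`. -/
noncomputable def neckCount {X : Type*} (L : Set (List X)) (n m : ℕ) : ℕ :=
  Nat.card (Quot (rotRel L n m))

/-- The strict growth series of `L(z^k)`, i.e. of `F_L` with `z^k` substituted. -/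
noncomputable def growthSeriesPow {X : Type*} [Fintype X] (L : Set (List X)) (k : ℕ) :
    PowerSeries ℕ :=
  PowerSeries.mk fun j => if k ∣ j then Set.ncard {w ∈ L | w.length = j / k} else 0

/-!
A necklace of `N` words is an orbit of the rotation action of `ℤ/N` on `N`-tuples, so by
Burnside's lemma `N` times the number of necklaces of length `m` is the total number of fixed
points of the rotations. A rotation by `j` generates the same subgroup as the rotation by
`d = gcd(j, N)`, and its fixed tuples are the `d`-periodic ones, i.e. `N/d` repetitions of a
`d`-tuple; these are counted by the coefficient of `z^m` in `F_L(z^{N/d})^d`. Exactly `φ(N/d)`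
rotations have `gcd(j, N) = d`, so the number of necklaces of `N` words is
`∑_{kl = N} φ(k)/(kl) [z^m] F_L(z^k)^l`, and summing over `N` gives the double series.
Since `[] ∉ L`, `F_L(z^k)^l` is divisible by `z^{kl}`, so only finitely many terms are nonzero.
-/

open Finset

theorem Fin.sum_gcd_eq_sum_totient_smul {M : Type*} [AddCommMonoid M] (N : ℕ)
    (f : ℕ → ℕ → M) :
    ∑ j : Fin N, f (N / j.val.gcd N) (j.val.gcd N)
      = ∑ p ∈ N.divisorsAntidiagonal, p.1.totient • f p.1 p.2 := by
  classical
  have hmaps : ∀ x ∈ range N, N.gcd x ∈ N.divisors := fun x hx =>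
    Nat.mem_divisors.mpr ⟨Nat.gcd_dvd_left _ _, (Nat.zero_lt_of_lt (mem_range.mp hx)).ne'⟩
  rw [Nat.sum_divisorsAntidiagonal' (fun a b => a.totient • f a b),
    Fin.sum_univ_eq_sum_range (fun x => f (N / x.gcd N) (x.gcd N)),
    ← sum_fiberwise_of_maps_to hmaps]
  refine sum_congr rfl fun d hd => ?_
  rw [Nat.totient_div_of_dvd (Nat.dvd_of_mem_divisors hd), ← Finset.sum_const]
  refine sum_congr rfl fun x hx => ?_
  rw [Nat.gcd_comm, (mem_filter.mp hx).2]

theorem Fin.sum_comp_modNat {M : Type*} [AddCommMonoid M] {e d : ℕ} (f : Fin d → M) :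
    ∑ i : Fin (e * d), f i.modNat = e • ∑ j, f j := by
  rw [Fintype.sum_equiv finProdFinEquiv.symm (fun i => f i.modNat) (fun p => f p.2) fun _ => rfl,
    Fintype.sum_prod_type]
  simp

open Fin.CommRing in
theorem Fin.castLE_modNat_add_divNat_nsmul {e d : ℕ} [NeZero (e * d)] (h : d ≤ e * d)
    (i : Fin (e * d)) : Fin.castLE h i.modNat + (i.divNat : ℕ) • (d : Fin (e * d)) = i := by
  have hmod : Fin.castLE h i.modNat = ((i.val % d : ℕ) : Fin (e * d)) := by
    ext
    rw [Fin.val_castLE, Fin.val_natCast, Fin.coe_modNat]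
    exact (Nat.mod_eq_of_lt ((Fin.is_lt i.modNat).trans_le h)).symm
  rw [hmod, nsmul_eq_mul, ← Nat.cast_mul, ← Nat.cast_add, Fin.coe_divNat, Nat.mod_add_div',
    Fin.cast_val_eq_self]

open Fin.CommRing in
theorem Fin.modNat_add_natCast_self {e d : ℕ} [NeZero (e * d)] (i : Fin (e * d)) :
    (i + (d : Fin (e * d))).modNat = i.modNat := by
  ext
  simp [Fin.val_add, Nat.mod_mod_of_dvd _ (Dvd.intro_left e rfl)]

open Fin.CommRing in
theorem Fin.zmultiples_natCast_gcd {N : ℕ} [NeZero N] (j : Fin N) :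
    AddSubgroup.zmultiples ((j.val.gcd N : ℕ) : Fin N) = AddSubgroup.zmultiples j := by
  apply le_antisymm
  · rw [AddSubgroup.zmultiples_le]
    refine ⟨j.val.gcdA N, ?_⟩
    have h := congrArg (Int.cast : ℤ → Fin N) (Nat.gcd_eq_gcd_ab j.val N)
    simp only [Int.cast_natCast, Int.cast_add, Int.cast_mul, Fin.natCast_self, zero_mul,
      add_zero, Fin.cast_val_eq_self] at h
    simp [h, zsmul_eq_mul, mul_comm]
  · rw [AddSubgroup.zmultiples_le]
    obtain ⟨q, hq⟩ := Nat.gcd_dvd_left j.val N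
    refine ⟨q, ?_⟩
    conv_rhs => rw [← Fin.cast_val_eq_self j, hq]
    simp [mul_comm]

theorem AddAction.fixedBy_eq_of_zmultiples_eq {G α : Type*} [AddGroup G] [AddAction G α]
    {g h : G} (hgh : AddSubgroup.zmultiples g = AddSubgroup.zmultiples h) :
    AddAction.fixedBy α g = AddAction.fixedBy α h := by
  ext a
  simp only [AddAction.mem_fixedBy, ← AddAction.mem_stabilizer_iff, ← AddSubgroup.zmultiples_le,
    hgh]

theorem tsum_sum_divisorsAntidiagonal_succ {E : Type*} [AddCommGroup E] [UniformSpace E]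
    [IsUniformAddGroup E] [CompleteSpace E] [T0Space E] {f : ℕ × ℕ → E}
    (hf : Summable fun p : ℕ × ℕ => f (p.1 + 1, p.2 + 1)) :
    ∑' n : ℕ, ∑ p ∈ (n + 1).divisorsAntidiagonal, f p =
      ∑' k : ℕ, ∑' l : ℕ, f (k + 1, l + 1) := by
  have hprod : Summable fun q : ℕ+ × ℕ+ => f (q.1, q.2) :=
    ((Equiv.pnatEquivNat.prodCongr Equiv.pnatEquivNat).summable_iff.mpr hf).congr fun q => by
      simp
  have hsigma : Summable fun s : (Σ n : ℕ+, (n : ℕ).divisorsAntidiagonal) => f s.2 := by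
    rw [← sigmaAntidiagonalEquivProd.symm.summable_iff]
    exact hprod
  calc ∑' n : ℕ, ∑ p ∈ (n + 1).divisorsAntidiagonal, f p
      = ∑' n : ℕ+, ∑' p : (n : ℕ).divisorsAntidiagonal, f p := by
        rw [← tsum_pnat_eq_tsum_succ (f := fun n => ∑ p ∈ n.divisorsAntidiagonal, f p)]
        simp only [Finset.tsum_subtype]
    _ = ∑' s : (Σ n : ℕ+, (n : ℕ).divisorsAntidiagonal), f s.2 := hsigma.tsum_sigma.symm
    _ = ∑' q : ℕ+ × ℕ+, f (q.1, q.2) := (sigmaAntidiagonalEquivProd.symm.tsum_eq _).symm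
    _ = ∑' k : ℕ+, ∑' l : ℕ+, f (k, l) := hprod.tsum_prod
    _ = ∑' k : ℕ, ∑' l : ℕ, f (k + 1, l + 1) := by
        rw [tsum_pnat_eq_tsum_succ (f := fun k => ∑' l : ℕ+, f (k, l))]
        exact tsum_congr fun k => tsum_pnat_eq_tsum_succ (f := fun l => f (k + 1, l))

section Necklaces

variable {X : Type*}

def WeightedLTuples (L : Set (List X)) (k l m : ℕ) : Type _ :=
  {v : Fin l → List X // (∀ i, v i ∈ L) ∧ ∑ i, k * (v i).length = m}

lemma finite_subtype_of_length_le [Finite X] {l m : ℕ} {P : (Fin l → List X) → Prop}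
    (h : ∀ v, P v → ∀ i, (v i).length ≤ m) : Finite {v // P v} :=
  ((Set.Finite.pi fun _ => List.finite_length_le X m).subset
    fun v hv i _ => h v hv i).to_subtype

section GrowthSeries

variable {L : Set (List X)} {k : ℕ}

lemma WeightedLTuples.finite [Finite X] (hk : 0 < k) (l m : ℕ) :
    Finite (WeightedLTuples L k l m) :=
  finite_subtype_of_length_le fun v hv i =>
    (Nat.le_mul_of_pos_left _ hk).trans <| hv.2 ▸
      single_le_sum (f := fun i => k * (v i).length) (fun _ _ => Nat.zero_le _) (mem_univ i)

lemma card_weightedLTuples_succ [Finite X] (hk : 0 < k) (l m : ℕ) :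
    Nat.card (WeightedLTuples L k (l + 1) m) = ∑ p ∈ antidiagonal m,
      Nat.card {w : List X // w ∈ L ∧ k * w.length = p.1} *
        Nat.card (WeightedLTuples L k l p.2) := by
  have := WeightedLTuples.finite (L := L) hk
  let splitWeight (v : WeightedLTuples L k (l + 1) m) : antidiagonal m :=
    ⟨(k * (v.1 0).length, ∑ i : Fin l, k * (v.1 i.succ).length), by
      rw [HasAntidiagonal.mem_antidiagonal,
        ← Fin.sum_univ_succ (f := fun i => k * (v.1 i).length)]
      exact v.2.2⟩
  have fiber (p : antidiagonal m) : {v // splitWeight v = p} ≃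
      {w : List X // w ∈ L ∧ k * w.length = p.1.1} × WeightedLTuples L k l p.1.2 :=
    { toFun v := (⟨v.1.1 0, v.1.2.1 0, congrArg (·.1.1) v.2⟩,
        ⟨Fin.tail v.1.1, fun _ => v.1.2.1 _, congrArg (·.1.2) v.2⟩)
      invFun x := ⟨⟨Fin.cons x.1.1 x.2.1, Fin.forall_fin_succ.mpr ⟨x.1.2.1, x.2.2.1⟩, by
          rw [Fin.sum_univ_succ]
          simp only [Fin.cons_zero, Fin.cons_succ]
          rw [x.1.2.2, x.2.2.2]
          exact HasAntidiagonal.mem_antidiagonal.mp p.2⟩,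
        Subtype.ext <| Prod.ext x.1.2.2 x.2.2.2⟩
      left_inv v := Subtype.ext <| Subtype.ext <| Fin.cons_self_tail _
      right_inv _ := rfl }
  rw [← Nat.card_congr (Equiv.sigmaFiberEquiv splitWeight), Nat.card_sigma,
    ← sum_coe_sort (antidiagonal m)]
  exact Fintype.sum_congr _ _ fun p => by rw [Nat.card_congr (fiber p), Nat.card_prod]

variable [Fintype X]

lemma coeff_growthSeriesPow (hk : 0 < k) (q : ℕ) :
    PowerSeries.coeff q (growthSeriesPow L k) =
      Nat.card {w : List X // w ∈ L ∧ k * w.length = q} := by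
  rw [growthSeriesPow, PowerSeries.coeff_mk]
  split_ifs with hq
  · rw [← Nat.card_coe_set_eq]
    refine Nat.card_congr (Equiv.subtypeEquivRight fun w => and_congr_right fun _ => ?_)
    rw [Nat.eq_div_iff_mul_eq_left hk.ne' hq, mul_comm, eq_comm]
  · have : IsEmpty {w : List X // w ∈ L ∧ k * w.length = q} :=
      ⟨fun w => hq ⟨_, w.2.2.symm⟩⟩
    rw [Nat.card_of_isEmpty]

theorem coeff_growthSeriesPow_pow (hk : 0 < k) (l m : ℕ) :
    PowerSeries.coeff m (growthSeriesPow L k ^ l) = Nat.card (WeightedLTuples L k l m) := by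
  induction l generalizing m with
  | zero =>
    rw [pow_zero, PowerSeries.coeff_one]
    split_ifs with hm <;> simp [WeightedLTuples, eq_comm, hm]
  | succ l ih =>
    rw [pow_succ', PowerSeries.coeff_mul, card_weightedLTuples_succ hk]
    simp only [coeff_growthSeriesPow hk, ih]

theorem coeff_growthSeriesPow_pow_of_lt (hL : [] ∉ L) {l m : ℕ} (h : m < k * l) :
    PowerSeries.coeff m (growthSeriesPow L k ^ l) = 0 := by
  have hX : PowerSeries.X ^ k ∣ growthSeriesPow L k := by
    refine PowerSeries.X_pow_dvd_iff.mpr fun j hj => ?_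
    rw [growthSeriesPow, PowerSeries.coeff_mk]
    split_ifs with hdvd
    · have hempty : {w ∈ L | w.length = 0} = ∅ := Set.eq_empty_of_forall_notMem fun w hw =>
        hL (List.length_eq_zero_iff.mp hw.2 ▸ hw.1)
      rw [Nat.eq_zero_of_dvd_of_lt hdvd hj, Nat.zero_div, hempty, Set.ncard_empty]
    · rfl
  have hXl := pow_dvd_pow_of_dvd hX l
  rw [← pow_mul] at hXl
  exact PowerSeries.X_pow_dvd_iff.mp hXl m h

end GrowthSeries

instance LTuples.finite [Finite X] (L : Set (List X)) (l m : ℕ) : Finite (LTuples L l m) :=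
  finite_subtype_of_length_le fun v hv _ =>
    hv.2 ▸ single_le_sum (f := fun i => (v i).length) (fun _ _ => Nat.zero_le _) (mem_univ _)

namespace LTuples

variable {L : Set (List X)} {N m : ℕ} [NeZero N]

instance : AddAction (Fin N) (LTuples L N m) where
  vadd j v := ⟨fun i => v.1 (i + j), fun _ => v.2.1 _,
    (Equiv.sum_comp (Equiv.addRight j) fun i => (v.1 i).length).trans v.2.2⟩
  zero_vadd v := Subtype.ext <| funext fun i => congrArg v.1 (add_zero i)
  add_vadd a b v := Subtype.ext <| funext fun i => congrArg v.1 (add_assoc i a b).symm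

lemma mem_fixedBy_iff {v : LTuples L N m} {j : Fin N} :
    v ∈ AddAction.fixedBy (LTuples L N m) j ↔ ∀ i, v.1 (i + j) = v.1 i :=
  ⟨fun h i => congrFun (congrArg Subtype.val h) i, fun h => Subtype.ext (funext h)⟩

lemma rotRel_iff_orbitRel (v w : LTuples L N m) :
    rotRel L N m v w ↔ AddAction.orbitRel (Fin N) (LTuples L N m) v w := by
  rw [AddAction.orbitRel_apply, AddAction.mem_orbit_symm]
  exact ⟨fun ⟨j, h⟩ => ⟨j, Subtype.ext (funext h).symm⟩,
    fun ⟨j, h⟩ => ⟨j, fun i => congrFun (congrArg Subtype.val h.symm) i⟩⟩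

theorem neckCount_mul_eq_sum_card_fixedBy [Finite X] :
    neckCount L N m * N = ∑ j : Fin N, Nat.card (AddAction.fixedBy (LTuples L N m) j) := by
  classical
  have := Fintype.ofFinite (LTuples L N m)
  have := Fintype.ofFinite (AddAction.orbitRel.Quotient (Fin N) (LTuples L N m))
  have burnside :=
    AddAction.sum_card_fixedBy_eq_card_orbits_mul_card_addGroup (Fin N) (LTuples L N m)
  rw [Fintype.card_fin] at burnside
  calc neckCount L N m * N
      = Nat.card (AddAction.orbitRel.Quotient (Fin N) (LTuples L N m)) * N := by
        rw [neckCount, Nat.card_congr (Quot.congrRight rotRel_iff_orbitRel)]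
        rfl
    _ = ∑ j : Fin N, Nat.card (AddAction.fixedBy (LTuples L N m) j) := by
        simp only [Nat.card_eq_fintype_card, burnside]

section Periodic

open Fin.NatCast

variable {e d : ℕ} [NeZero (e * d)]

lemma apply_eq_apply_castLE_modNat {v : LTuples L (e * d) m}
    (hv : v ∈ AddAction.fixedBy (LTuples L (e * d) m) (d : Fin (e * d))) (h : d ≤ e * d)
    (i : Fin (e * d)) : v.1 i = v.1 (Fin.castLE h i.modNat) := by
  have hmul := mem_fixedBy_iff.mp (AddAction.mem_fixedBy_zsmul hv i.divNat)
    (Fin.castLE h i.modNat)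
  rwa [natCast_zsmul, Fin.castLE_modNat_add_divNat_nsmul] at hmul

def fixedByEquiv :
    AddAction.fixedBy (LTuples L (e * d) m) (d : Fin (e * d)) ≃ WeightedLTuples L e d m :=
  have h : d ≤ e * d :=
    Nat.le_mul_of_pos_left d (Nat.pos_of_ne_zero (left_ne_zero_of_mul (NeZero.ne (e * d))))
  { toFun v := ⟨fun b => v.1.1 (Fin.castLE h b), fun _ => v.1.2.1 _, by
      rw [← mul_sum, ← smul_eq_mul,
        ← Fin.sum_comp_modNat (f := fun b => (v.1.1 (Fin.castLE h b)).length)]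
      simp only [← apply_eq_apply_castLE_modNat v.2 h]
      exact v.1.2.2⟩
    invFun u := ⟨⟨fun i => u.1 i.modNat, fun _ => u.2.1 _, by
        rw [Fin.sum_comp_modNat (f := fun b => (u.1 b).length), smul_eq_mul, mul_sum]
        exact u.2.2⟩,
      mem_fixedBy_iff.mpr fun i => congrArg u.1 (Fin.modNat_add_natCast_self i)⟩
    left_inv v := Subtype.ext <| Subtype.ext <| funext fun i =>
      (apply_eq_apply_castLE_modNat v.2 h i).symm
    right_inv u := Subtype.ext <| funext fun b => congrArg u.1 <| Fin.ext <| by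
      simp [Nat.mod_eq_of_lt] }

end Periodic

open Fin.NatCast in
lemma card_fixedBy_natCast {e d : ℕ} (he : e * d = N) :
    Nat.card (AddAction.fixedBy (LTuples L N m) (d : Fin N)) =
      Nat.card (WeightedLTuples L e d m) := by
  subst he
  exact Nat.card_congr fixedByEquiv

lemma card_fixedBy (j : Fin N) :
    Nat.card (AddAction.fixedBy (LTuples L N m) j) =
      Nat.card (WeightedLTuples L (N / j.val.gcd N) (j.val.gcd N) m) := by
  rw [← AddAction.fixedBy_eq_of_zmultiples_eq (Fin.zmultiples_natCast_gcd j)]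
  exact card_fixedBy_natCast (Nat.div_mul_cancel (Nat.gcd_dvd_right _ _))

end LTuples

theorem neckCount_mul_eq_sum_totient_mul_coeff [Fintype X] (L : Set (List X)) (N m : ℕ)
    [NeZero N] : neckCount L N m * N = ∑ p ∈ N.divisorsAntidiagonal,
      p.1.totient * PowerSeries.coeff m (growthSeriesPow L p.1 ^ p.2) := by
  rw [LTuples.neckCount_mul_eq_sum_card_fixedBy]
  simp only [LTuples.card_fixedBy]
  rw [Fin.sum_gcd_eq_sum_totient_smul N fun a b => Nat.card (WeightedLTuples L a b m)]
  refine sum_congr rfl fun p hp => ?_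
  rw [smul_eq_mul, coeff_growthSeriesPow_pow
    (Nat.pos_of_mem_divisors (Nat.fst_mem_divisors_of_mem_antidiagonal hp))]

theorem neckCount_eq_sum_divisorsAntidiagonal [Fintype X] (L : Set (List X)) (N m : ℕ)
    [NeZero N] : (neckCount L N m : ℝ) = ∑ p ∈ N.divisorsAntidiagonal,
      (p.1.totient : ℝ) / (p.1 * p.2) *
        ((PowerSeries.coeff m (growthSeriesPow L p.1 ^ p.2) : ℕ) : ℝ) := by
  have hcount : (neckCount L N m : ℝ) * N = ∑ p ∈ N.divisorsAntidiagonal,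
      (p.1.totient : ℝ) * ((PowerSeries.coeff m (growthSeriesPow L p.1 ^ p.2) : ℕ) : ℝ) := by
    exact_mod_cast neckCount_mul_eq_sum_totient_mul_coeff L N m
  rw [eq_div_of_mul_eq (Nat.cast_ne_zero.mpr (NeZero.ne N)) hcount, sum_div]
  refine sum_congr rfl fun p hp => ?_
  rw [← (Nat.mem_divisorsAntidiagonal.mp hp).1, Nat.cast_mul]
  ring

end Necklaces

/-- The strict growth series of the set of necklaces over `L` (the disjoint union over
`n ≥ 1` of the quotients of `L^{×n}` by the cyclic permutation action of `C_n`, with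
length of an orbit the common total length of its tuples) equals
`∑_{k≥1} ∑_{l≥1} (φ(k)/(kl)) (F_L(z^k))^l`, coefficientwise: for each `m`,
the number of necklaces of length `m` is the corresponding coefficient sum. -/
theorem growthSeries_necklaces {X : Type*} [Fintype X] (L : Set (List X))
    (hL : [] ∉ L) (m : ℕ) :
    (∑' n : ℕ, (neckCount L (n + 1) m : ℝ))
      = ∑' k : ℕ, ∑' l : ℕ,
          (Nat.totient (k + 1) : ℝ) / ((k + 1) * (l + 1)) *
            ((PowerSeries.coeff m ((growthSeriesPow L (k + 1)) ^ (l + 1)) : ℕ) : ℝ) := by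
  set a : ℕ × ℕ → ℝ := fun p => (p.1.totient : ℝ) / (p.1 * p.2) *
    ((PowerSeries.coeff m (growthSeriesPow L p.1 ^ p.2) : ℕ) : ℝ)
  have hsum : Summable fun p : ℕ × ℕ => a (p.1 + 1, p.2 + 1) := by
    refine summable_of_ne_finset_zero (s := range m ×ˢ range m) fun p hp => ?_
    have hlt : m < (p.1 + 1) * (p.2 + 1) := by
      rw [mem_product, mem_range, mem_range, not_and_or, not_lt, not_lt] at hp
      rcases hp with h | h <;> nlinarith
    simp only [a, coeff_growthSeriesPow_pow_of_lt hL hlt, Nat.cast_zero, mul_zero]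
  calc ∑' n : ℕ, (neckCount L (n + 1) m : ℝ)
      = ∑' n : ℕ, ∑ p ∈ (n + 1).divisorsAntidiagonal, a p :=
        tsum_congr fun n => neckCount_eq_sum_divisorsAntidiagonal L (n + 1) m
    _ = ∑' k : ℕ, ∑' l : ℕ, a (k + 1, l + 1) := tsum_sum_divisorsAntidiagonal_succ hsum
    _ = _ := by push_cast [a]; rfl
end

section
/- In a graph product of groups with generating set the union of the vertex group generating sets, for any subset V' of the vertex set, the geodesic words over the sub-alphabet X_{V'} for the full graph product are exactly the geodesics of the subgraph product: Geo(G_V, X_V) \cap X_{V'}^* = Geo(G_{V'}, X_{V'}). -/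
/-- Word length of `g` over a generating subset `X` of a group. -/
noncomputable def wlen {G : Type*} [Group G] (X : Set G) (g : G) : ℕ :=
  sInf {n | ∃ w : List G, w.length = n ∧ (∀ x ∈ w, x ∈ X) ∧ w.prod = g}

/-- The defining commutator relators of a graph product. -/
def gpRels {V : Type*} (Γ : SimpleGraph V) (G : V → Type*) [∀ v, Group (G v)] :
    Set (Monoid.CoprodI G) :=
  {x | ∃ (v w : V) (a : G v) (b : G w), Γ.Adj v w ∧
    x = Monoid.CoprodI.of a * Monoid.CoprodI.of b *
          (Monoid.CoprodI.of a)⁻¹ * (Monoid.CoprodI.of b)⁻¹}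

/-- The graph product of the groups `G v` over the graph `Γ`. -/
abbrev GraphProduct {V : Type*} (Γ : SimpleGraph V) (G : V → Type*) [∀ v, Group (G v)] :
    Type _ :=
  Monoid.CoprodI G ⧸ Subgroup.normalClosure (gpRels Γ G)

/-- The canonical homomorphism from a vertex group into the graph product. -/
def GraphProduct.of {V : Type*} (Γ : SimpleGraph V) (G : V → Type*) [∀ v, Group (G v)]
    (v : V) : G v →* GraphProduct Γ G :=
  (QuotientGroup.mk' _).comp Monoid.CoprodI.of

/-- The generating set `X_S = ∪_{v ∈ S} X_v` inside the graph product. -/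
def XS {V : Type*} (Γ : SimpleGraph V) (G : V → Type*) [∀ v, Group (G v)]
    (X : ∀ v, Set (G v)) (S : Set V) : Set (GraphProduct Γ G) :=
  ⋃ v ∈ S, (GraphProduct.of Γ G v) '' (X v)

/-- The alphabet of letters of the graph product generating set: a letter is a
vertex together with a generator of its vertex group. -/
def GPLetter {V : Type*} (G : V → Type*) (X : ∀ v, Set (G v)) : Type _ :=
  Σ v : V, {x : G v // x ∈ X v}

/-- Evaluation of a word over the alphabet in the graph product. -/
def evalWord {V : Type*} (Γ : SimpleGraph V) (G : V → Type*) [∀ v, Group (G v)]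
    (X : ∀ v, Set (G v)) (w : List (GPLetter G X)) : GraphProduct Γ G :=
  (w.map fun a => GraphProduct.of Γ G a.1 a.2.1).prod

open Monoid Classical in
/-- The retraction of the graph product onto the subgraph product over `V'`,
killing the vertex groups outside `V'`. -/
noncomputable def gpRetr {V : Type*} (Γ : SimpleGraph V) (G : V → Type*) [∀ v, Group (G v)]
    (V' : Set V) : GraphProduct Γ G →* GraphProduct Γ G :=
  QuotientGroup.lift _
    (CoprodI.lift fun v =>
      if v ∈ V' then ((QuotientGroup.mk' _).comp (CoprodI.of (M := G) (i := v))) else 1)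
    (by
      apply (Subgroup.normalClosure_le_normal ?_)
      rintro x ⟨v, w, a, b, hadj, rfl⟩
      simp only [SetLike.mem_coe, MonoidHom.mem_ker, map_mul, map_inv, CoprodI.lift_of]
      by_cases hv : v ∈ V' <;> by_cases hw : w ∈ V' <;> simp [hv, hw]
      rw [← QuotientGroup.mk_inv, ← QuotientGroup.mk_inv, ← QuotientGroup.mk_mul,
        ← QuotientGroup.mk_mul, ← QuotientGroup.mk_mul, QuotientGroup.eq_one_iff]
      exact Subgroup.subset_normalClosure ⟨v, w, a, b, hadj, rfl⟩)

open Classical in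
lemma gpRetr_of {V : Type*} (Γ : SimpleGraph V) (G : V → Type*) [∀ v, Group (G v)]
    (V' : Set V) (v : V) (x : G v) :
    gpRetr Γ G V' (GraphProduct.of Γ G v x)
      = if v ∈ V' then GraphProduct.of Γ G v x else 1 := by
  simp only [gpRetr, GraphProduct.of, MonoidHom.comp_apply, QuotientGroup.mk'_apply]
  rw [QuotientGroup.lift_mk', Monoid.CoprodI.lift_of]
  by_cases hv : v ∈ V' <;> simp [hv, GraphProduct.of]

private lemma list_prod_filter_ne_one {G : Type*} [Monoid G] (p : G → Bool)
    (hp : ∀ x, p x = false → x = 1) (l : List G) :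
    (l.filter p).prod = l.prod := by
  induction l with
  | nil => rfl
  | cons a t ih =>
    cases h : p a
    · rw [List.filter_cons, if_neg (by simp [h]), ih, List.prod_cons, hp a h, one_mul]
    · simp [List.filter_cons, h, ih]

lemma wlen_eq_of_fixed {V : Type*} (Γ : SimpleGraph V)
    (G : V → Type*) [∀ v, Group (G v)] (X : ∀ v, Set (G v)) (V' : Set V)
    (w : List (GPLetter G X)) (hw : ∀ a ∈ w, a.1 ∈ V') :
    wlen (XS Γ G X Set.univ) (evalWord Γ G X w)
      = wlen (XS Γ G X V') (evalWord Γ G X w) := by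
  classical
  set g := evalWord Γ G X w with hg
  set S1 := {n | ∃ u : List (GraphProduct Γ G), u.length = n ∧
      (∀ x ∈ u, x ∈ XS Γ G X Set.univ) ∧ u.prod = g} with hS1
  set S2 := {n | ∃ u : List (GraphProduct Γ G), u.length = n ∧
      (∀ x ∈ u, x ∈ XS Γ G X V') ∧ u.prod = g} with hS2
  have hsub : S2 ⊆ S1 := by
    rintro n ⟨u, hlen, hmem, hprod⟩
    exact ⟨u, hlen, fun x hx => by
      rcases Set.mem_iUnion₂.1 (hmem x hx) with ⟨v, hv, hx'⟩
      exact Set.mem_iUnion₂.2 ⟨v, Set.mem_univ v, hx'⟩, hprod⟩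
  have hne2 : S2.Nonempty := by
    refine ⟨w.length, w.map fun a => GraphProduct.of Γ G a.1 a.2.1, by simp, ?_,
      by rw [hg]; rfl⟩
    intro x hx
    rcases List.mem_map.1 hx with ⟨a, ha, rfl⟩
    exact Set.mem_iUnion₂.2 ⟨a.1, hw a ha, ⟨a.2.1, a.2.2, rfl⟩⟩
  have hne1 : S1.Nonempty := ⟨_, hsub hne2.choose_spec⟩
  -- g is fixed by the retraction
  have hfix : gpRetr Γ G V' g = g := by
    rw [hg]
    unfold evalWord
    rw [map_list_prod]
    congr 1
    rw [List.map_map]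
    apply List.map_congr_left
    intro a ha
    simp [Function.comp, gpRetr_of, hw a ha]
  refine le_antisymm ?_ ?_
  · exact Nat.sInf_le (hsub (Nat.sInf_mem hne2))
  · -- sInf S2 ≤ sInf S1
    obtain ⟨u, hlen, hmem, hprod⟩ := Nat.sInf_mem hne1
    set u' := (u.map (gpRetr Γ G V')).filter (fun x => x ≠ 1) with hu'
    have hmem' : ∀ x ∈ u', x ∈ XS Γ G X V' := by
      intro x hx
      rw [hu', List.mem_filter] at hx
      obtain ⟨hx1, hx2⟩ := hx
      rcases List.mem_map.1 hx1 with ⟨y, hy, rfl⟩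
      rcases Set.mem_iUnion₂.1 (hmem y hy) with ⟨v, -, ξ, hξ, rfl⟩
      rw [gpRetr_of] at hx2 ⊢
      by_cases hv : v ∈ V'
      · simp only [if_pos hv]
        exact Set.mem_iUnion₂.2 ⟨v, hv, ⟨ξ, hξ, rfl⟩⟩
      · simp [hv] at hx2
    have hprod' : u'.prod = g := by
      rw [hu', list_prod_filter_ne_one _ (fun x h => by simpa using h),
        ← map_list_prod, hprod, hfix]
    have : sInf S2 ≤ u'.length := Nat.sInf_le ⟨u', rfl, hmem', hprod'⟩
    calc sInf S2 ≤ u'.length := this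
      _ ≤ (u.map (gpRetr Γ G V')).length := List.length_filter_le _ _
      _ = u.length := by simp
      _ = sInf S1 := hlen

/-- In a graph product over a finite simple graph, with each vertex group `G v`
having an inverse-closed generating set `X v`, and `X_S = ∪_{v∈S} X v` for
`S ⊆ V`, the geodesic words of the full graph product over the sub-alphabet
`X_{V'}` are exactly the geodesic words of the subgraph product `G_{V'}`:
`Geo(G_V, X_V) ∩ X_{V'}^* = Geo(G_{V'}, X_{V'})`. -/
theorem geodesics_subgraphProduct {V : Type*} [Fintype V] (Γ : SimpleGraph V)
    (G : V → Type*) [∀ v, Group (G v)] (X : ∀ v, Set (G v))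
    (hinv : ∀ v, ∀ x ∈ X v, x⁻¹ ∈ X v)
    (hgen : ∀ v, Subgroup.closure (X v) = ⊤)
    (V' : Set V) :
    {w : List (GPLetter G X) |
        w.length = wlen (XS Γ G X Set.univ) (evalWord Γ G X w) ∧ ∀ a ∈ w, a.1 ∈ V'}
      = {w : List (GPLetter G X) |
          (∀ a ∈ w, a.1 ∈ V') ∧ w.length = wlen (XS Γ G X V') (evalWord Γ G X w)} := by
  ext w
  simp only [Set.mem_setOf_eq]
  constructor
  · rintro ⟨hlen, hV⟩
    exact ⟨hV, hlen.trans (wlen_eq_of_fixed Γ G X V' w hV)⟩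
  · rintro ⟨hV, hlen⟩
    exact ⟨hlen.trans (wlen_eq_of_fixed Γ G X V' w hV).symm, hV⟩
end
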